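/- Let A be an APFA with property Q, where for each i the set A(i) is chosen maximal among sets for which property Q holds at level i. Then for each i ∈ {1,...,p-1}, A(i) ⊆ A(i-1) ∪ {i}, where A(0) is the empty set. -/
import Mathlib


open scoped Classical

universe u v w

/-- The raw data of a finite directed multigraph with edge symbols:
sources, targets, symbols, a root, a sink, and the common root-to-sink path length `p`. -/
structure PreAPFA (V : Type u) (E : Type v) (Sym : Type w) where
  src : E → V
  tgt : E → V
  sym : E → Sym
  root : V
  sink : V
  p : ℕ

namespace PreAPFA

variable {V : Type u} {E : Type v} {Sym : Type w}

/-- `A.IsPathFrom u w es`: the list of edges `es` is a directed path from `u` to `w`. -/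
def IsPathFrom (A : PreAPFA V E Sym) : V → V → List E → Prop
  | u, w, [] => u = w
  | u, w, e :: es => A.src e = u ∧ A.IsPathFrom (A.tgt e) w es

/-- `es` is a root-to-sink path. -/
def IsRootSink (A : PreAPFA V E Sym) (es : List E) : Prop :=
  A.IsPathFrom A.root A.sink es

/-- The node reached from `u` after traversing the edges `es`. -/
def nodeAfter (A : PreAPFA V E Sym) : V → List E → V
  | u, [] => u
  | _, e :: es => A.nodeAfter (A.tgt e) es

/-- `x` is a node at level `i`: some path from the root to `x` has length `i`. -/
def HasLevel (A : PreAPFA V E Sym) (x : V) (i : ℕ) : Prop :=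
  ∃ es : List E, A.IsPathFrom A.root x es ∧ es.length = i

end PreAPFA

/-- The graph of an acyclic probabilistic finite automaton: a finite directed multigraph
with a unique root (only outgoing edges) and unique sink (only incoming edges), distinct
symbols on the outgoing edges of every node, every node on a root-to-sink path, and all
root-to-sink paths of the same length `p`. -/
structure APFAGraph (V : Type u) (E : Type v) (Sym : Type w) [Fintype V] [Fintype E]
    extends PreAPFA V E Sym where
  no_in_root : ∀ e : E, tgt e ≠ root
  no_out_sink : ∀ e : E, src e ≠ sink
  sym_inj : ∀ e f : E, src e = src f → sym e = sym f → e = f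
  connected : ∀ x : V, ∃ es fs : List E,
    toPreAPFA.IsPathFrom root x es ∧ toPreAPFA.IsPathFrom x sink fs
  const_len : ∀ es : List E, toPreAPFA.IsRootSink es → es.length = p

/-- An acyclic probabilistic finite automaton (APFA): an `APFAGraph` together with
nonnegative edge probabilities summing to one on the outgoing edges of every non-sink node. -/
structure APFA (V : Type u) (E : Type v) (Sym : Type w) [Fintype V] [Fintype E]
    extends APFAGraph V E Sym where
  prob : E → ℝ
  prob_nonneg : ∀ e : E, 0 ≤ prob e
  prob_sum : ∀ x : V, x ≠ sink → ∑ e : E, (if src e = x then prob e else 0) = 1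


/-- Two paths agree on the index set `S` (1-indexed positions) if their symbol strings
have identical entries at every position in `S`. -/
def PreAPFA.agreeOn {V : Type u} {E : Type v} {Sym : Type w}
    (A : PreAPFA V E Sym) (S : Finset ℕ) (es fs : List E) : Prop :=
  ∀ j ∈ S, (es.map A.sym)[j - 1]? = (fs.map A.sym)[j - 1]?

/-- Property Q at level `i` with index set `S ⊆ {1, …, i}`: for each level-`i` node `w`,
the set `P(w)` of root-to-`w` paths equals `Q(x_S)` for some value `x_S`.  Equivalently,
two root-to-level-`i` paths end at the same node if and only if their symbol strings agree
on `S`. -/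
def PreAPFA.propQat {V : Type u} {E : Type v} {Sym : Type w}
    (A : PreAPFA V E Sym) (i : ℕ) (S : Finset ℕ) : Prop :=
  ∀ es fs : List E,
    A.IsPathFrom A.root (A.nodeAfter A.root es) es →
    A.IsPathFrom A.root (A.nodeAfter A.root fs) fs →
    es.length = i → fs.length = i →
    (A.nodeAfter A.root es = A.nodeAfter A.root fs ↔ A.agreeOn S es fs)


namespace PreAPFA

variable {V : Type u} {E : Type v} {Sym : Type w}

lemma isPathFrom_append (A : PreAPFA V E Sym) {u v w : V} {es fs : List E}
    (h1 : A.IsPathFrom u v es) (h2 : A.IsPathFrom v w fs) :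
    A.IsPathFrom u w (es ++ fs) := by
  induction es generalizing u with
  | nil => cases h1; simpa [IsPathFrom] using h2
  | cons e es ih =>
    obtain ⟨h, h'⟩ := h1
    exact ⟨h, ih h'⟩

lemma nodeAfter_of_isPathFrom (A : PreAPFA V E Sym) {u v : V} {es : List E}
    (h : A.IsPathFrom u v es) : A.nodeAfter u es = v := by
  induction es generalizing u with
  | nil => exact h
  | cons e es ih => exact ih h.2

end PreAPFA

/-- **Statement 13.** Let `A` be an APFA with property Q, where for each
`i ∈ {1, …, p-1}` the set `Af i ⊆ {1, …, i}` is chosen maximal among the sets for which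
property Q holds at level `i`.  Then `Af i ⊆ Af (i-1) ∪ {i}` for each `i ∈ {1, …, p-1}`,
where `Af 0 = ∅`. -/
theorem propQ_maximal_sets_running
    {V : Type u} {E : Type v} {Sym : Type w} [Fintype V] [Fintype E]
    (A : APFA V E Sym) (Af : ℕ → Finset ℕ) (hA0 : Af 0 = ∅)
    (hsub : ∀ i, 1 ≤ i → i ≤ A.p - 1 → Af i ⊆ Finset.Icc 1 i)
    (hQ : ∀ i, 1 ≤ i → i ≤ A.p - 1 → A.toPreAPFA.propQat i (Af i))
    (hmax : ∀ i, 1 ≤ i → i ≤ A.p - 1 → ∀ S : Finset ℕ, S ⊆ Finset.Icc 1 i →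
      A.toPreAPFA.propQat i S → Af i ⊆ S → S = Af i) :
    ∀ i, 1 ≤ i → i ≤ A.p - 1 → Af i ⊆ Af (i - 1) ∪ {i} := by
  intro i hi1 hip j hj
  -- j is in [1, i]
  have hjIcc := hsub i hi1 hip hj
  rw [Finset.mem_Icc] at hjIcc
  rcases eq_or_lt_of_le hjIcc.2 with hji | hji
  · exact Finset.mem_union_right _ (by simp [hji])
  · -- j ≤ i - 1, show j ∈ Af (i-1)
    have hi2 : 2 ≤ i := by omega
    have hi1' : 1 ≤ i - 1 := by omega
    have hip' : i - 1 ≤ A.p - 1 := by omega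
    have hp2 : 2 ≤ A.p := by omega
    set S : Finset ℕ := Af (i - 1) ∪ {j} with hS
    have hSsub : S ⊆ Finset.Icc 1 (i - 1) := by
      intro k hk
      rcases Finset.mem_union.mp hk with h | h
      · exact hsub _ hi1' hip' h
      · simp only [Finset.mem_singleton] at h
        subst h
        rw [Finset.mem_Icc]
        omega
    have hQi1 := hQ (i - 1) hi1' hip'
    have hQS : A.toPreAPFA.propQat (i - 1) S := by
      intro es fs hes hfs hle hlf
      constructor
      · intro heq
        have hagree := (hQi1 es fs hes hfs hle hlf).mp heq
        intro k hk
        rcases Finset.mem_union.mp hk with h | h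
        · exact hagree k h
        · simp only [Finset.mem_singleton] at h
          subst h
          -- extend both paths by an edge out of the common endpoint
          set w := A.toPreAPFA.nodeAfter A.toPreAPFA.root es with hw
          obtain ⟨es', gs, -, hgs⟩ := A.connected w
          have hfull : A.toPreAPFA.IsPathFrom A.root A.sink (es ++ gs) :=
            A.toPreAPFA.isPathFrom_append hes hgs
          have hlen : (es ++ gs).length = A.p := A.const_len _ hfull
          rw [List.length_append, hle] at hlen
          have hgsne : gs ≠ [] := by
            intro h; rw [h] at hlen; simp at hlen; omega
          obtain ⟨g, gs', rfl⟩ := List.exists_cons_of_ne_nil hgsne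
          obtain ⟨hsrc, -⟩ := hgs
          have hg1 : A.toPreAPFA.IsPathFrom w (A.tgt g) [g] := ⟨hsrc, rfl⟩
          have hes1 : A.toPreAPFA.IsPathFrom A.root (A.tgt g) (es ++ [g]) :=
            A.toPreAPFA.isPathFrom_append hes hg1
          have hfs1 : A.toPreAPFA.IsPathFrom A.root (A.tgt g) (fs ++ [g]) :=
            A.toPreAPFA.isPathFrom_append hfs (heq ▸ hg1)
          have hne : A.toPreAPFA.nodeAfter A.root (es ++ [g]) = A.tgt g :=
            A.toPreAPFA.nodeAfter_of_isPathFrom hes1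
          have hnf : A.toPreAPFA.nodeAfter A.root (fs ++ [g]) = A.tgt g :=
            A.toPreAPFA.nodeAfter_of_isPathFrom hfs1
          have hQi := hQ i hi1 hip
          have hagree' := (hQi (es ++ [g]) (fs ++ [g])
            (hne ▸ hes1) (hnf ▸ hfs1)
            (by simp [hle]; omega) (by simp [hlf]; omega)).mp (by rw [hne, hnf])
          have := hagree' k hj
          have hje : k - 1 < (es.map A.sym).length := by
            rw [List.length_map, hle]; omega
          have hjf : k - 1 < (fs.map A.sym).length := by
            rw [List.length_map, hlf]; omega
          rwa [List.map_append, List.map_append,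
            List.getElem?_append_left hje, List.getElem?_append_left hjf] at this
      · intro hagree
        refine (hQi1 es fs hes hfs hle hlf).mpr ?_
        intro k hk
        exact hagree k (Finset.mem_union_left _ hk)
    have := hmax (i - 1) hi1' hip' S hSsub hQS Finset.subset_union_left
    have hjmem : j ∈ Af (i - 1) := this ▸ Finset.mem_union_right _ (by simp)
    exact Finset.mem_union_left _ hjmem
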